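/- Let X be a compact subset of ℝ^N equipped with a finite positive Borel measure μ, and let (T_n) be a sequence of weakly nonlinear (sublinear and translatable) and monotone operators from C(X), the continuous real-valued functions on X, into itself. Assume that for each of the test functions h ∈ {1, pr_1, …, pr_N, −pr_1, …, −pr_N, Σ_{k=1}^N pr_k²} (restricted to X) and every ε > 0 one has μ({x ∈ X : |T_n(h)(x) − h(x)| ≥ ε}) → 0 as n → ∞. Then for every f ∈ C(X) and every ε > 0, μ({x ∈ X : |T_n(f)(x) − f(x)| ≥ ε}) → 0 as n → ∞. -/

import Mathlib

/-!
Uniform continuity gives, for every `ε > 0`, a `K` with `|f t - f x| ≤ ε + K ψₓ(t)`, where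
`ψₓ = Σ_k (pr_k - x_k)²`. Monotonicity, sublinearity and translatability turn this into
`|T f x - f x · T 1 x| ≤ ε · T 1 x + K · T ψₓ x`. Since `ψₓ` is a combination of the test functions
with nonnegative coefficients, bounded on the compact `X`, and `ψₓ(x) = 0`, sublinearity bounds
`T ψₓ x` by a constant times `Σ_h |T h x - h x|` over the test functions `h`. Hence
`|T_n f - f| ≤ ε + C Σ_h |T_n h - h|` pointwise with `C` independent of `n`, and convergence in
measure passes from the right-hand side to the left.
-/

open MeasureTheory Filter Topology Set

structure IsWeaklyNonlinearMonotone {Y : Type*} [TopologicalSpace Y]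
    (T : C(Y, ℝ) → C(Y, ℝ)) : Prop where
  map_add_le : ∀ f g, T (f + g) ≤ T f + T g
  map_smul_of_nonneg : ∀ α : ℝ, 0 ≤ α → ∀ f, T (α • f) = α • T f
  monotone : Monotone T
  map_add_smul_one_of_nonneg : ∀ f, ∀ α : ℝ, 0 ≤ α → T (f + α • 1) = T f + α • T 1

namespace IsWeaklyNonlinearMonotone

variable {Y : Type*} [TopologicalSpace Y] {T : C(Y, ℝ) → C(Y, ℝ)}

theorem map_zero (hT : IsWeaklyNonlinearMonotone T) : T 0 = 0 := by
  simpa using hT.map_smul_of_nonneg 0 le_rfl 0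

theorem map_add_smul_one (hT : IsWeaklyNonlinearMonotone T) (f : C(Y, ℝ)) (c : ℝ) :
    T (f + c • 1) = T f + c • T 1 := by
  rcases le_total 0 c with hc | hc
  · exact hT.map_add_smul_one_of_nonneg f c hc
  · have h := hT.map_add_smul_one_of_nonneg (f + c • 1) (-c) (neg_nonneg.mpr hc)
    rw [add_assoc, ← add_smul, add_neg_cancel, zero_smul, add_zero] at h
    rw [h, neg_smul, neg_add_cancel_right]

theorem map_smul_one (hT : IsWeaklyNonlinearMonotone T) (c : ℝ) : T (c • 1) = c • T 1 := by
  simpa [hT.map_zero] using hT.map_add_smul_one 0 c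

theorem map_sum_smul_le (hT : IsWeaklyNonlinearMonotone T) {ι : Type*} (s : Finset ι)
    {a : ι → ℝ} (ha : ∀ i ∈ s, 0 ≤ a i) (g : ι → C(Y, ℝ)) :
    T (∑ i ∈ s, a i • g i) ≤ ∑ i ∈ s, a i • T (g i) :=
  (Finset.le_sum_of_subadditive T hT.map_zero.le hT.map_add_le s _).trans_eq
    (Finset.sum_congr rfl fun i hi => hT.map_smul_of_nonneg _ (ha i hi) _)

theorem apply_sum_smul_le (hT : IsWeaklyNonlinearMonotone T) {ι : Type*} (s : Finset ι)
    {a : ι → ℝ} (ha : ∀ i ∈ s, 0 ≤ a i) (g : ι → C(Y, ℝ)) (x : Y) :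
    T (∑ i ∈ s, a i • g i) x ≤
      (∑ i ∈ s, a i • g i) x + ∑ i ∈ s, a i * |T (g i) x - g i x| := by
  have h := ContinuousMap.le_def.mp (hT.map_sum_smul_le s ha g) x
  simp only [ContinuousMap.sum_apply, ContinuousMap.smul_apply, smul_eq_mul] at h ⊢
  rw [← Finset.sum_add_distrib]
  refine h.trans (Finset.sum_le_sum fun i hi => ?_)
  nlinarith [ha i hi, le_abs_self (T (g i) x - g i x)]

theorem abs_apply_sub_mul_apply_one_le (hT : IsWeaklyNonlinearMonotone T) {f ψ : C(Y, ℝ)}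
    {x : Y} {ε K : ℝ} (hK : 0 ≤ K) (hf : ∀ t, |f t - f x| ≤ ε + K * ψ t) :
    |T f x - f x * T 1 x| ≤ ε * T 1 x + K * T ψ x := by
  have hup : f ≤ K • ψ + (f x + ε) • 1 := ContinuousMap.le_def.mpr fun t => by
    simp only [ContinuousMap.add_apply, ContinuousMap.smul_apply, ContinuousMap.one_apply,
      smul_eq_mul, mul_one]
    linarith [le_abs_self (f t - f x), hf t]
  have hlow : (f x - ε) • 1 ≤ f + K • ψ := ContinuousMap.le_def.mpr fun t => by
    simp only [ContinuousMap.add_apply, ContinuousMap.smul_apply, ContinuousMap.one_apply,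
      smul_eq_mul, mul_one]
    linarith [neg_abs_le (f t - f x), hf t]
  have hTup := ContinuousMap.le_def.mp (hT.monotone hup) x
  have hTlow := ContinuousMap.le_def.mp ((hT.monotone hlow).trans (hT.map_add_le _ _)) x
  rw [hT.map_add_smul_one, hT.map_smul_of_nonneg K hK] at hTup
  rw [hT.map_smul_one, hT.map_smul_of_nonneg K hK] at hTlow
  simp only [ContinuousMap.add_apply, ContinuousMap.smul_apply, smul_eq_mul] at hTup hTlow
  rw [abs_le]
  constructor <;> linarith

end IsWeaklyNonlinearMonotone

theorem ContinuousMap.exists_abs_sub_le_add_mul_dist_sq {Y : Type*} [PseudoMetricSpace Y]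
    [CompactSpace Y] (f : C(Y, ℝ)) {ε : ℝ} (hε : 0 < ε) :
    ∃ K, 0 ≤ K ∧ ∀ t x, |f t - f x| ≤ ε + K * dist t x ^ 2 := by
  obtain ⟨δ, hδ, hfδ⟩ := Metric.uniformContinuous_iff.mp
    (CompactSpace.uniformContinuous_of_continuous f.continuous) ε hε
  refine ⟨2 * ‖f‖ / δ ^ 2, by positivity, fun t x => ?_⟩
  rcases lt_or_ge (dist t x) δ with htx | htx
  · have := hfδ htx
    rw [Real.dist_eq] at this
    linarith [show 0 ≤ 2 * ‖f‖ / δ ^ 2 * dist t x ^ 2 by positivity]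
  · have hbound : |f t - f x| ≤ 2 * ‖f‖ := by
      have ht := f.norm_coe_le_norm t
      have hx := f.norm_coe_le_norm x
      rw [Real.norm_eq_abs] at ht hx
      linarith [abs_sub (f t) (f x)]
    calc |f t - f x| ≤ 2 * ‖f‖ / δ ^ 2 * δ ^ 2 := by rwa [div_mul_cancel₀ _ (by positivity)]
      _ ≤ ε + 2 * ‖f‖ / δ ^ 2 * dist t x ^ 2 := by
        have : δ ^ 2 ≤ dist t x ^ 2 := pow_le_pow_left₀ hδ.le htx 2
        linarith [mul_le_mul_of_nonneg_left this (by positivity : 0 ≤ 2 * ‖f‖ / δ ^ 2)]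

theorem dist_sq_le_sum_sq {ι : Type*} [Fintype ι] (x y : ι → ℝ) :
    dist x y ^ 2 ≤ ∑ i, (x i - y i) ^ 2 := by
  have h : dist x y ≤ √(∑ i, (x i - y i) ^ 2) := by
    refine (dist_pi_le_iff (Real.sqrt_nonneg _)).mpr fun i => ?_
    exact Real.abs_le_sqrt <| Finset.single_le_sum (f := fun i => (x i - y i) ^ 2)
      (fun i _ => sq_nonneg _) (Finset.mem_univ i)
  calc dist x y ^ 2 ≤ √(∑ i, (x i - y i) ^ 2) ^ 2 := by gcongr
    _ = ∑ i, (x i - y i) ^ 2 := Real.sq_sqrt (Finset.sum_nonneg fun i _ => sq_nonneg _)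

section TestFunctions

variable {N : ℕ} (X : Set (Fin N → ℝ))

def testFunction : Option (Option (Fin N ⊕ Fin N)) → C(X, ℝ)
  | none => 1
  | some none => ⟨fun x => ∑ k, x.1 k ^ 2,
      continuous_finsetSum _ fun k _ => ((continuous_apply k).comp continuous_subtype_val).pow 2⟩
  | some (some (.inl k)) => ⟨fun x => x.1 k, (continuous_apply k).comp continuous_subtype_val⟩
  | some (some (.inr k)) =>
      ⟨fun x => -x.1 k, ((continuous_apply k).comp continuous_subtype_val).neg⟩

/-- `testCoeff y` expands `∑ k, (t k - y k) ^ 2` in the test functions with nonnegative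
coefficients: `-2 y_k t_k = 2 y_k⁻ t_k + 2 y_k⁺ (-t_k)`. -/
def testCoeff (y : Fin N → ℝ) : Option (Option (Fin N ⊕ Fin N)) → ℝ
  | none => ∑ k, y k ^ 2
  | some none => 1
  | some (some (.inl k)) => 2 * (y k)⁻
  | some (some (.inr k)) => 2 * (y k)⁺

variable {X}

theorem sum_testCoeff_smul_testFunction_apply (y : Fin N → ℝ) (t : X) :
    (∑ i, testCoeff y i • testFunction X i) t = ∑ k, (t.1 k - y k) ^ 2 := by
  simp only [Fintype.sum_option, Fintype.sum_sum_type, testCoeff, testFunction,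
    ContinuousMap.add_apply, ContinuousMap.sum_apply, ContinuousMap.smul_apply, smul_eq_mul,
    ContinuousMap.one_apply, ContinuousMap.coe_mk, one_mul, mul_one,
    ← Finset.sum_add_distrib]
  refine Finset.sum_congr rfl fun k _ => ?_
  linear_combination (-2 * t.1 k) * posPart_sub_negPart (y k)

theorem testCoeff_nonneg (y : Fin N → ℝ) (i : Option (Option (Fin N ⊕ Fin N))) :
    0 ≤ testCoeff y i := by
  rcases i with _ | _ | k | k <;> simp only [testCoeff] <;> positivity

theorem testCoeff_le (y : Fin N → ℝ) (i : Option (Option (Fin N ⊕ Fin N))) :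
    testCoeff y i ≤ 1 + 2 * ‖y‖ + N * ‖y‖ ^ 2 := by
  have hy : ∀ k, |y k| ≤ ‖y‖ := fun k => by simpa using norm_le_pi_norm y k
  have hsum : ∑ k, y k ^ 2 ≤ N * ‖y‖ ^ 2 := by
    calc ∑ k, y k ^ 2 ≤ ∑ _k : Fin N, ‖y‖ ^ 2 :=
          Finset.sum_le_sum fun k _ => by rw [← sq_abs]; gcongr; exact hy k
      _ = N * ‖y‖ ^ 2 := by simp
  have hN : 0 ≤ N * ‖y‖ ^ 2 := by positivity
  rcases i with _ | _ | k | k <;> simp only [testCoeff]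
  · linarith [norm_nonneg y]
  · linarith [norm_nonneg y]
  all_goals linarith [norm_nonneg y, hy k, posPart_add_negPart (y k), posPart_nonneg (y k),
    negPart_nonneg (y k)]

theorem IsWeaklyNonlinearMonotone.abs_apply_sub_le [CompactSpace X] {T : C(X, ℝ) → C(X, ℝ)}
    (hT : IsWeaklyNonlinearMonotone T) {f : C(X, ℝ)} {ε K R : ℝ} (hε : 0 ≤ ε) (hK : 0 ≤ K)
    (hR : ∀ x : X, ‖x.1‖ ≤ R) (hf : ∀ t x : X, |f t - f x| ≤ ε + K * dist t x ^ 2) (x : X) :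
    |T f x - f x| ≤ ε + (ε + ‖f‖ + K * (1 + 2 * R + N * R ^ 2)) *
      ∑ i, |T (testFunction X i) x - testFunction X i x| := by
  set D := ∑ i, |T (testFunction X i) x - testFunction X i x|
  set ψ := ∑ i, testCoeff x.1 i • testFunction X i
  have hD : 0 ≤ D := Finset.sum_nonneg fun i _ => abs_nonneg _
  have hD1 : |T 1 x - 1| ≤ D :=
    Finset.single_le_sum (f := fun i => |T (testFunction X i) x - testFunction X i x|)
      (fun i _ => abs_nonneg _) (Finset.mem_univ none)
  have hcoeff (i) : testCoeff x.1 i ≤ 1 + 2 * R + N * R ^ 2 := (testCoeff_le x.1 i).trans (by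
    have := hR x; have := norm_nonneg x.1; gcongr)
  have hψx : ψ x = 0 := by simp only [ψ, sum_testCoeff_smul_testFunction_apply]; simp
  have hψ : T ψ x ≤ (1 + 2 * R + N * R ^ 2) * D := by
    refine (hT.apply_sum_smul_le Finset.univ (fun i _ => testCoeff_nonneg x.1 i)
      (testFunction X) x).trans ?_
    rw [hψx, zero_add, Finset.mul_sum]
    exact Finset.sum_le_sum fun i _ => mul_le_mul_of_nonneg_right (hcoeff i) (abs_nonneg _)
  have hkor : |T f x - f x * T 1 x| ≤ ε * T 1 x + K * T ψ x :=
    hT.abs_apply_sub_mul_apply_one_le hK fun t => by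
      rw [sum_testCoeff_smul_testFunction_apply]
      have := dist_sq_le_sum_sq t.1 x.1
      rw [← Subtype.dist_eq] at this
      linarith [hf t x, mul_le_mul_of_nonneg_left this hK]
  have hfx : |f x| ≤ ‖f‖ := by simpa using f.norm_coe_le_norm x
  calc |T f x - f x| ≤ |T f x - f x * T 1 x| + |f x * T 1 x - f x| := abs_sub_le _ _ _
    _ = |T f x - f x * T 1 x| + |f x| * |T 1 x - 1| := by rw [← abs_mul, mul_sub, mul_one]
    _ ≤ ε * T 1 x + K * ((1 + 2 * R + N * R ^ 2) * D) + ‖f‖ * D :=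
        add_le_add (hkor.trans (by gcongr)) (mul_le_mul hfx hD1 (abs_nonneg _) (norm_nonneg _))
    _ ≤ ε + (ε + ‖f‖ + K * (1 + 2 * R + N * R ^ 2)) * D := by
        nlinarith [le_abs_self (T 1 x - 1)]

end TestFunctions

theorem tendsto_measure_setOf_le_of_le_add_mul_sum {α ι : Type*} [MeasurableSpace α]
    [Fintype ι] {μ : Measure α} {F : ℕ → α → ℝ} {G : ι → ℕ → α → ℝ}
    (hG : ∀ i, ∀ δ : ℝ, 0 < δ → Tendsto (fun n => μ {x | δ ≤ G i n x}) atTop (𝓝 0))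
    {η ε C : ℝ} (hηε : η < ε) (hC : 0 ≤ C) (hF : ∀ n x, F n x ≤ η + C * ∑ i, G i n x) :
    Tendsto (fun n => μ {x | ε ≤ F n x}) atTop (𝓝 0) := by
  set δ := (ε - η) / ((C + 1) * (Fintype.card ι + 1))
  have hδ : 0 < δ := div_pos (by linarith) (by positivity)
  have hsub (n) : {x | ε ≤ F n x} ⊆ ⋃ i, {x | δ ≤ G i n x} := by
    intro x hx
    by_contra hnot
    simp only [mem_iUnion, mem_ofPred_eq, not_exists, not_le] at hnot hx
    have hsum : ∑ i, G i n x ≤ Fintype.card ι * δ := by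
      simpa using Finset.sum_le_sum fun i (_ : i ∈ Finset.univ) => (hnot i).le
    have hCδ : C * (Fintype.card ι * δ) < ε - η := by
      rw [← mul_assoc, mul_div_assoc', div_lt_iff₀ (by positivity)]
      nlinarith
    nlinarith [hF n x, mul_le_mul_of_nonneg_left hsum hC]
  have hbound (n) : μ {x | ε ≤ F n x} ≤ ∑ i, μ {x | δ ≤ G i n x} :=
    (measure_mono (hsub n)).trans (measure_iUnion_fintype_le _ _)
  have hlim : Tendsto (fun n => ∑ i, μ {x | δ ≤ G i n x}) atTop (𝓝 0) := by
    simpa using tendsto_finsetSum Finset.univ fun i _ => hG i δ hδ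
  exact tendsto_of_tendsto_of_tendsto_of_le_of_le tendsto_const_nhds hlim (fun _ => bot_le)
    hbound

theorem korovkin_inMeasure_weaklyNonlinear_general {N : ℕ} (X : Set (Fin N → ℝ)) [CompactSpace X]
    (μ : Measure X)
    (T : ℕ → C(X, ℝ) → C(X, ℝ))
    (hsubadd : ∀ n, ∀ f g : C(X, ℝ), T n (f + g) ≤ T n f + T n g)
    (hhom : ∀ n, ∀ (α : ℝ), 0 ≤ α → ∀ f : C(X, ℝ), T n (α • f) = α • T n f)
    (hmono : ∀ n, ∀ f g : C(X, ℝ), f ≤ g → T n f ≤ T n g)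
    (htrans : ∀ n, ∀ f : C(X, ℝ), ∀ (α : ℝ), 0 ≤ α →
      T n (f + α • (1 : C(X, ℝ))) = T n f + α • T n (1 : C(X, ℝ)))
    -- convergence in measure for each test function
    (htest : ∀ h : C(X, ℝ),
      ((⇑h = fun _ => (1 : ℝ)) ∨
        (∃ k : Fin N, ⇑h = fun x : X => (x : Fin N → ℝ) k) ∨
        (∃ k : Fin N, ⇑h = fun x : X => -((x : Fin N → ℝ) k)) ∨
        (⇑h = fun x : X => ∑ k, ((x : Fin N → ℝ) k) ^ 2)) →
      ∀ ε : ℝ, 0 < ε →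
        Tendsto (fun n => μ {x | ε ≤ |T n h x - h x|}) atTop (𝓝 0))
    (f : C(X, ℝ)) :
    ∀ ε : ℝ, 0 < ε →
      Tendsto (fun n => μ {x | ε ≤ |T n f x - f x|}) atTop (𝓝 0) := by
  intro ε hε
  have hT (n : ℕ) : IsWeaklyNonlinearMonotone (T n) :=
    ⟨hsubadd n, hhom n, hmono n, htrans n⟩
  have htestFunction (i : Option (Option (Fin N ⊕ Fin N))) := htest (testFunction X i) (by
    rcases i with _ | _ | k | k
    exacts [Or.inl rfl, Or.inr (Or.inr (Or.inr rfl)), Or.inr (Or.inl ⟨k, rfl⟩),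
      Or.inr (Or.inr (Or.inl ⟨k, rfl⟩))])
  obtain ⟨K, hK, hfK⟩ := f.exists_abs_sub_le_add_mul_dist_sq (half_pos hε)
  obtain ⟨R, hR0, hR⟩ := (isCompact_iff_compactSpace.mpr ‹_›).isBounded.exists_pos_norm_le
  exact tendsto_measure_setOf_le_of_le_add_mul_sum htestFunction (half_lt_self hε)
    (by positivity)
    fun n x => (hT n).abs_apply_sub_le (half_pos hε).le hK (fun x => hR x x.2) hfK x

/-- **Theorem `thm-measure`, second part.** Korovkin-type theorem for
convergence in measure: weakly nonlinear (sublinear and translatable) and monotone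
operators on `C(X)`, `X` a compact subset of `ℝ^N` with a finite Borel measure `μ`,
test functions `1, ±pr_1, …, ±pr_N, Σ pr_k²`; conclusion for every `f ∈ C(X)`. -/
theorem korovkin_inMeasure_weaklyNonlinear {N : ℕ} (X : Set (Fin N → ℝ)) [CompactSpace X]
    (μ : Measure X) [IsFiniteMeasure μ]
    (T : ℕ → C(X, ℝ) → C(X, ℝ))
    (hsubadd : ∀ n, ∀ f g : C(X, ℝ), T n (f + g) ≤ T n f + T n g)
    (hhom : ∀ n, ∀ (α : ℝ), 0 ≤ α → ∀ f : C(X, ℝ), T n (α • f) = α • T n f)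
    (hmono : ∀ n, ∀ f g : C(X, ℝ), f ≤ g → T n f ≤ T n g)
    (htrans : ∀ n, ∀ f : C(X, ℝ), ∀ (α : ℝ), 0 ≤ α →
      T n (f + α • (1 : C(X, ℝ))) = T n f + α • T n (1 : C(X, ℝ)))
    -- convergence in measure for each test function
    (htest : ∀ h : C(X, ℝ),
      ((⇑h = fun _ => (1 : ℝ)) ∨
        (∃ k : Fin N, ⇑h = fun x : X => (x : Fin N → ℝ) k) ∨
        (∃ k : Fin N, ⇑h = fun x : X => -((x : Fin N → ℝ) k)) ∨
        (⇑h = fun x : X => ∑ k, ((x : Fin N → ℝ) k) ^ 2)) →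
      ∀ ε : ℝ, 0 < ε →
        Tendsto (fun n => μ {x | ε ≤ |T n h x - h x|}) atTop (𝓝 0))
    (f : C(X, ℝ)) :
    ∀ ε : ℝ, 0 < ε →
      Tendsto (fun n => μ {x | ε ≤ |T n f x - f x|}) atTop (𝓝 0) :=
  korovkin_inMeasure_weaklyNonlinear_general X μ T hsubadd hhom hmono htrans htest f
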